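/- For every degree d ≥ 2, the complement ℂ \ M_d of the Multibrot set is connected; that is, M_d is a full compact set. -/

import Mathlib

/-!
Write `P_n(c)` for the `n`-th iterate of `z ↦ z ^ d + c` at `0`. Since `|z| ≥ max 3 |c|` forces
`|z ^ d + c| ≥ 2 |z|`, a parameter lies outside `M_d` iff `|P_n(c)| > 3` for some `n ≥ 1`, and
`|P_n(c)| ≥ |c|` whenever `|c| ≥ 3`. So `ℂ \ M_d` is the union of the superlevel sets
`{|P_n| > 3}`, `n ≥ 1`, each containing the connected exterior `{|c| > 3}`. By the maximum modulus
principle no component of such a superlevel set of a polynomial is bounded, so every component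
meets the exterior and each superlevel set is connected; they share the point `4`.
-/

open Set Metric Bornology

section Topology

variable {X : Type*} [TopologicalSpace X]

theorem IsOpen.disjoint_frontier_connectedComponentIn [LocallyConnectedSpace X] {V : Set X}
    (hV : IsOpen V) (x : X) : Disjoint (frontier (connectedComponentIn V x)) V := by
  refine Set.disjoint_left.2 fun w hw hwV => ?_
  rw [hV.connectedComponentIn.frontier_eq] at hw
  obtain ⟨y, hyw, hyx⟩ :=
    mem_closure_iff.1 hw.1 _ hV.connectedComponentIn (mem_connectedComponentIn hwV)
  have hwx : connectedComponentIn V w = connectedComponentIn V x :=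
    (connectedComponentIn_eq hyw).trans (connectedComponentIn_eq hyx).symm
  exact hw.2 (hwx ▸ mem_connectedComponentIn hwV)

theorem isPreconnected_of_forall_connectedComponentIn_inter_nonempty {V T : Set X}
    (hT : IsPreconnected T) (hTV : T ⊆ V)
    (h : ∀ x ∈ V, (connectedComponentIn V x ∩ T).Nonempty) : IsPreconnected V := by
  rcases V.eq_empty_or_nonempty with rfl | ⟨x, hx⟩
  · exact isPreconnected_empty
  obtain ⟨t, -, htT⟩ := h x hx
  suffices V ⊆ connectedComponentIn V t by
    rw [this.antisymm (connectedComponentIn_subset V t)]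
    exact isPreconnected_connectedComponentIn
  intro y hy
  obtain ⟨s, hsy, hsT⟩ := h y hy
  rw [connectedComponentIn_eq (hT.subset_connectedComponentIn htT hTV hsT),
    ← connectedComponentIn_eq hsy]
  exact mem_connectedComponentIn hy

end Topology

theorem isPreconnected_setOf_lt_norm {E : Type*} [NormedAddCommGroup E] [NormedSpace ℝ E]
    (hE : 1 < Module.rank ℝ E) {R : ℝ} (hR : 0 ≤ R) : IsPreconnected {z : E | R < ‖z‖} := by
  have hprod : IsPreconnected (sphere (0 : E) 1 ×ˢ Ioi R) :=
    (isPreconnected_sphere hE 0 1).prod isPreconnected_Ioi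
  convert hprod.image (fun p => p.2 • p.1) (by fun_prop) using 1
  ext z
  constructor
  · intro hz
    have hz0 : ‖z‖ ≠ 0 := (hR.trans_lt hz).ne'
    refine ⟨(‖z‖⁻¹ • z, ‖z‖), ⟨?_, hz⟩, ?_⟩
    · simp [norm_smul, hz0]
    · simp [smul_smul, hz0]
  · rintro ⟨⟨u, t⟩, ⟨hu, ht : R < t⟩, rfl⟩
    rw [mem_sphere_zero_iff_norm] at hu
    simpa [norm_smul, hu, abs_of_pos (hR.trans_lt ht)] using ht

section MaximumModulus

variable {E F : Type*} [NormedAddCommGroup E] [NormedSpace ℂ E]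
  [NormedAddCommGroup F] [NormedSpace ℂ F] {f : E → F} {r : ℝ}

theorem Differentiable.not_isBounded_connectedComponentIn_lt_norm [Nontrivial E]
    (hf : Differentiable ℂ f) {z : E} (hz : r < ‖f z‖) :
    ¬IsBounded (connectedComponentIn {w | r < ‖f w‖} z) := by
  intro hb
  have hV : IsOpen {w | r < ‖f w‖} := isOpen_lt continuous_const hf.continuous.norm
  have hfrontier : ∀ w ∈ frontier (connectedComponentIn {w | r < ‖f w‖} z), ‖f w‖ ≤ r :=
    fun w hw => not_lt.1 fun hw' =>
      (hV.disjoint_frontier_connectedComponentIn z).notMem_of_mem_left hw hw'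
  exact (Complex.norm_le_of_forall_mem_frontier_norm_le hb hf.diffContOnCl hfrontier
    (subset_closure (mem_connectedComponentIn hz))).not_gt hz

theorem Differentiable.isPreconnected_lt_norm (hf : Differentiable ℂ f)
    (hE : 1 < Module.rank ℝ E) {R : ℝ} (hR : 0 ≤ R) (hfR : ∀ z, R < ‖z‖ → r < ‖f z‖) :
    IsPreconnected {z | r < ‖f z‖} := by
  have : Nontrivial E := (rank_pos_iff_nontrivial (R := ℝ)).1 (zero_lt_one.trans hE)
  refine isPreconnected_of_forall_connectedComponentIn_inter_nonempty
    (isPreconnected_setOf_lt_norm hE hR) hfR fun z hz => ?_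
  have hunb := hf.not_isBounded_connectedComponentIn_lt_norm hz
  rw [isBounded_iff_forall_norm_le] at hunb
  push Not at hunb
  exact hunb R

end MaximumModulus

def critOrbit {R : Type*} [Semiring R] (d n : ℕ) (c : R) : R := (fun z => z ^ d + c)^[n] 0

def multibrotSet (𝕜 : Type*) [NormedDivisionRing 𝕜] (d : ℕ) : Set 𝕜 :=
  {c | ∃ R : ℝ, ∀ n, ‖critOrbit d n c‖ ≤ R}

section Semiring

variable {R : Type*} [Semiring R] {d n : ℕ} {c : R}

@[simp]
theorem critOrbit_zero : critOrbit d 0 c = 0 := rfl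

theorem critOrbit_succ : critOrbit d (n + 1) c = critOrbit d n c ^ d + c :=
  Function.iterate_succ_apply' _ _ _

theorem critOrbit_one (hd : d ≠ 0) : critOrbit d 1 c = c := by
  simp [critOrbit_succ, zero_pow hd]

end Semiring

theorem differentiable_critOrbit {𝕜 : Type*} [NontriviallyNormedField 𝕜] (d n : ℕ) :
    Differentiable 𝕜 (critOrbit d n : 𝕜 → 𝕜) := by
  induction n with
  | zero => exact differentiable_const 0
  | succ n ih =>
    rw [show critOrbit d (n + 1) = fun c : 𝕜 => critOrbit d n c ^ d + c from
      funext fun _ => critOrbit_succ]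
    exact (ih.pow d).add differentiable_id

section Escape

variable {𝕜 : Type*} [NormedDivisionRing 𝕜] {d n : ℕ} {c : 𝕜}

theorem two_mul_norm_le_norm_pow_add (hd : 2 ≤ d) {z : 𝕜} (hz : 3 ≤ ‖z‖) (hc : ‖c‖ ≤ ‖z‖) :
    2 * ‖z‖ ≤ ‖z ^ d + c‖ := by
  have hsq : ‖z‖ ^ 2 ≤ ‖z‖ ^ d := pow_le_pow_right₀ (by linarith) hd
  calc 2 * ‖z‖ ≤ ‖z‖ ^ 2 - ‖z‖ := by nlinarith
    _ ≤ ‖z ^ d‖ - ‖-c‖ := by rw [norm_pow, norm_neg]; linarith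
    _ ≤ ‖z ^ d + c‖ := by simpa using norm_sub_norm_le (z ^ d) (-c)

theorem two_pow_mul_le_norm_critOrbit_add (hd : 2 ≤ d) (h3 : 3 ≤ ‖critOrbit d n c‖)
    (hc : ‖c‖ ≤ ‖critOrbit d n c‖) (k : ℕ) :
    2 ^ k * ‖critOrbit d n c‖ ≤ ‖critOrbit d (n + k) c‖ := by
  induction k with
  | zero => simp
  | succ k ih =>
    have hle : ‖critOrbit d n c‖ ≤ ‖critOrbit d (n + k) c‖ :=
      le_trans (le_mul_of_one_le_left (norm_nonneg _) (one_le_pow₀ one_le_two)) ih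
    calc 2 ^ (k + 1) * ‖critOrbit d n c‖ ≤ 2 * ‖critOrbit d (n + k) c‖ := by
          rw [pow_succ']; linarith
      _ ≤ ‖critOrbit d (n + (k + 1)) c‖ := by
          rw [← add_assoc, critOrbit_succ]
          exact two_mul_norm_le_norm_pow_add hd (h3.trans hle) (hc.trans hle)

theorem norm_le_norm_critOrbit_succ (hd : 2 ≤ d) (hc : 3 ≤ ‖c‖) (n : ℕ) :
    ‖c‖ ≤ ‖critOrbit d (n + 1) c‖ := by
  have h1 : critOrbit d 1 c = c := critOrbit_one (by omega)
  have hgrowth := two_pow_mul_le_norm_critOrbit_add hd (by rwa [h1]) (by rw [h1]) n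
  rw [h1, add_comm] at hgrowth
  exact le_trans (le_mul_of_one_le_left (norm_nonneg _) (one_le_pow₀ one_le_two)) hgrowth

theorem exists_lt_norm_critOrbit (hd : 2 ≤ d) (h3 : 3 ≤ ‖critOrbit d n c‖)
    (hc : ‖c‖ ≤ ‖critOrbit d n c‖) (R : ℝ) : ∃ m, R < ‖critOrbit d m c‖ := by
  obtain ⟨k, hk⟩ := pow_unbounded_of_one_lt R one_lt_two
  refine ⟨n + k, hk.trans_le ?_⟩
  calc (2 : ℝ) ^ k ≤ 2 ^ k * ‖critOrbit d n c‖ :=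
        le_mul_of_one_le_right (by positivity) (by linarith)
    _ ≤ _ := two_pow_mul_le_norm_critOrbit_add hd h3 hc k

theorem compl_multibrotSet_eq_iUnion (hd : 2 ≤ d) :
    (multibrotSet 𝕜 d)ᶜ = ⋃ n : ℕ, {c : 𝕜 | 3 < ‖critOrbit d (n + 1) c‖} := by
  ext c
  simp only [multibrotSet, mem_compl_iff, mem_ofPred_eq, not_exists, not_forall, not_le,
    mem_iUnion]
  constructor
  · intro hunb
    obtain ⟨n, hn⟩ := hunb 3
    cases n with
    | zero => norm_num at hn
    | succ n => exact ⟨n, hn⟩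
  · rintro ⟨n, hn⟩
    rcases le_total ‖c‖ ‖critOrbit d (n + 1) c‖ with hc | hc
    · exact exists_lt_norm_critOrbit hd hn.le hc
    · have h1 : critOrbit d 1 c = c := critOrbit_one (by omega)
      exact exists_lt_norm_critOrbit (n := 1) hd (by rw [h1]; linarith) (by rw [h1])

end Escape

/-- The complement of the Multibrot set M_d is connected; M_d is a full compact set. -/
theorem multibrot_compl_isConnected (d : ℕ) (hd : 2 ≤ d) :
    IsConnected {c : ℂ | ∃ R : ℝ, ∀ n : ℕ,
      ‖(fun z : ℂ => z ^ d + c)^[n] 0‖ ≤ R}ᶜ := by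
  change IsConnected (multibrotSet ℂ d)ᶜ
  have hlarge : ∀ n : ℕ, ∀ c : ℂ, 3 < ‖c‖ → 3 < ‖critOrbit d (n + 1) c‖ := fun n c hc =>
    hc.trans_le (norm_le_norm_critOrbit_succ hd hc.le n)
  have h4 : (4 : ℂ) ∈ ⋂ n : ℕ, {c : ℂ | 3 < ‖critOrbit d (n + 1) c‖} :=
    mem_iInter.2 fun n => hlarge n 4 (by norm_num)
  rw [compl_multibrotSet_eq_iUnion hd]
  refine ⟨⟨4, mem_iUnion.2 ⟨0, mem_iInter.1 h4 0⟩⟩, isPreconnected_iUnion ⟨4, h4⟩ fun n => ?_⟩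
  exact (differentiable_critOrbit d (n + 1)).isPreconnected_lt_norm
    (by rw [Complex.rank_real_complex]; exact Nat.one_lt_ofNat) zero_le_three (hlarge n)
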